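/- For the reflection I : Cat → Preord, given two 'connected components' C_μ = C ×_{HI(C)} T and D_ν = D ×_{HI(D)} T (pullbacks of units η_C, η_D along functors μ, ν from the two-object one-arrow preorder T), the pullback C_μ ×_T D_ν taken over the second projections satisfies I(C_μ ×_T D_ν) ≅ T. Hence the reflection I : Cat → Preord has stable units: I preserves all pullbacks over objects of the form HI(C) of pairs of unit-pullbacks. -/

import Mathlib

open CategoryTheory
universe u

/-
The unit `η` is the identity on objects, so its pullbacks `C_μ ⟶ T` and `D_ν ⟶ T`, and then
`W ⟶ D_ν ⟶ T`, are injective on objects. Since `T` is free on one arrow, `μ` and `ν` lift through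
`η`, which makes these projections split epimorphisms. A split epimorphism `W ⟶ T` that is
injective on objects identifies the objects of `W` with those of `T` and has an arrow over the
arrow of `T`, and that is all `I W` remembers.
-/

/-- The objects of a small category, regarded as carrying the reflected preorder. -/
def PreOb (A : Cat.{u, u}) : Type u := A

instance instPreObPreorder (A : Cat.{u, u}) : Preorder (PreOb A) where
  le x y := Nonempty ((show ↑A from x) ⟶ (show ↑A from y))
  le_refl x := ⟨𝟙 _⟩
  le_trans _ _ _ h h' := ⟨h.some ≫ h'.some⟩

/-- The reflection `I : Cat → Preord` on objects (regarded as landing in `Cat`). -/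
def ICat (A : Cat.{u, u}) : Cat.{u, u} := Cat.of (PreOb A)

instance (A : Cat.{u, u}) : Preorder ↑(ICat A) := instPreObPreorder A

/-- In the reflected preorder, a morphism of `A` witnesses an inequality. -/
def toLe {A : Cat.{u, u}} {x y : ↑A} (g : x ⟶ y) :
    (show PreOb A from x) ≤ (show PreOb A from y) := ⟨g⟩

/-- The unit of the reflection `Cat → Preord`. -/
def etaF (A : Cat.{u, u}) : A ⟶ ICat A where
  toFunctor.obj x := (show PreOb A from x)
  toFunctor.map {_x _y} g := homOfLE (toLe g)
  toFunctor.map_id _ := rfl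
  toFunctor.map_comp _ _ := rfl

/-- The reflection `I : Cat → Preord` on morphisms. -/
def IFun {A B : Cat.{u, u}} (f : A ⟶ B) : ICat A ⟶ ICat B where
  toFunctor.obj x := (show PreOb B from f.toFunctor.obj (show ↑A from x))
  toFunctor.map {_x _y} g := homOfLE (Nonempty.map (fun h => f.toFunctor.map h) (leOfHom g))
  toFunctor.map_id _ := rfl
  toFunctor.map_comp _ _ := rfl

/-- The preorder `T` with two objects `a ≤ a'` and a single non-identity arrow,
regarded as a category. -/
noncomputable def TCat : Cat.{u, u} := Cat.of (ULift.{u} Bool)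

instance (A : Cat.{u, u}) : Quiver.IsThin (ICat A) := fun _ _ =>
  inferInstanceAs (Subsingleton (ULift (PLift _)))

instance : Quiver.IsThin TCat.{u} := fun _ _ =>
  inferInstanceAs (Subsingleton (ULift (PLift _)))

lemma Cat.hom_ext_of_isThin {A B : Cat.{u, u}} [Quiver.IsThin B] {F G : A ⟶ B}
    (h : ∀ x, F.toFunctor.obj x = G.toFunctor.obj x) : F = G :=
  Cat.ext (CategoryTheory.Functor.ext h fun _ _ _ => Subsingleton.elim _ _)

namespace TCat

noncomputable instance : Preorder TCat.{u} := inferInstanceAs (Preorder (ULift.{u} Bool))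

lemma not_hom_true_false (h : (⟨true⟩ : TCat.{u}) ⟶ ⟨false⟩) : False :=
  absurd (ULift.up_le (α := Bool).mp (leOfHom h)) (by decide)

variable {A : Cat.{u, u}}

private def mkFunctorObj (X Y : A) : TCat.{u} → A
  | ⟨false⟩ => X
  | ⟨true⟩ => Y

def mkFunctor {X Y : A} (f : X ⟶ Y) : TCat.{u} ⟶ A where
  toFunctor.obj := mkFunctorObj X Y
  toFunctor.map {s t} h := match s, t, h with
    | ⟨false⟩, ⟨false⟩, _ => 𝟙 X
    | ⟨false⟩, ⟨true⟩, _ => f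
    | ⟨true⟩, ⟨true⟩, _ => 𝟙 Y
    | ⟨true⟩, ⟨false⟩, h => (not_hom_true_false h).elim
  toFunctor.map_id := by rintro ⟨_ | _⟩ <;> rfl
  toFunctor.map_comp := by
    rintro ⟨_ | _⟩ ⟨_ | _⟩ ⟨_ | _⟩ g h
    all_goals first
      | exact (not_hom_true_false g).elim
      | exact (not_hom_true_false h).elim
      | simp [mkFunctorObj]

lemma exists_lift_etaF {C : Cat.{u, u}} (μ : TCat.{u} ⟶ ICat C) :
    ∃ F : TCat.{u} ⟶ C, F ≫ etaF C = μ := by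
  have hle : (⟨false⟩ : TCat.{u}) ≤ ⟨true⟩ := ULift.up_le (α := Bool).mpr (by decide)
  obtain ⟨f⟩ := leOfHom (μ.toFunctor.map (homOfLE hle))
  exact ⟨mkFunctor f, Cat.hom_ext_of_isThin (by rintro ⟨_ | _⟩ <;> rfl)⟩

end TCat

lemma etaF_obj_injective (A : Cat.{u, u}) : Function.Injective (etaF A).toFunctor.obj :=
  fun _ _ h => h

lemma CategoryTheory.IsPullback.exists_section_snd {C : Type*} [Category C] {P X Y Z : C}
    {fst : P ⟶ X} {snd : P ⟶ Y} {f : X ⟶ Z} {g : Y ⟶ Z} (h : IsPullback fst snd f g)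
    {k : Y ⟶ X} (hk : k ≫ f = g) : ∃ s : Y ⟶ P, s ≫ snd = 𝟙 Y :=
  ⟨h.lift k (𝟙 Y) (by rw [hk, Category.id_comp]), h.lift_snd _ _ _⟩

lemma Cat.injective_obj_snd_of_isPullback {P X Y Z : Cat.{u, u}} {fst : P ⟶ X} {snd : P ⟶ Y}
    {f : X ⟶ Z} {g : Y ⟶ Z} (h : IsPullback fst snd f g)
    (hf : Function.Injective f.toFunctor.obj) : Function.Injective snd.toFunctor.obj := by
  intro x y hxy
  have hw (p : P) :
      f.toFunctor.obj (fst.toFunctor.obj p) = g.toFunctor.obj (snd.toFunctor.obj p) :=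
    Functor.congr_obj (congrArg Cat.Hom.toFunctor h.w) p
  -- objects of `P` are functors out of the point, which the pullback separates
  have hx : ((Functor.fromPUnit x).toCatHom : Cat.of (Discrete PUnit) ⟶ P) =
      (Functor.fromPUnit y).toCatHom :=
    h.hom_ext (Cat.ext (Discrete.functor_ext fun _ => hf ((hw x).trans (hxy ▸ (hw y).symm))))
      (Cat.ext (Discrete.functor_ext fun _ => hxy))
  exact congrArg (·.toFunctor.obj ⟨⟨⟩⟩) hx

namespace ICat

noncomputable def lift {A B : Cat.{u, u}} [Quiver.IsThin B] (τ : A ⟶ B) : ICat A ⟶ B where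
  toFunctor.obj x := τ.toFunctor.obj x
  toFunctor.map g := τ.toFunctor.map (leOfHom g).some
  toFunctor.map_id _ := Subsingleton.elim _ _
  toFunctor.map_comp _ _ := Subsingleton.elim _ _

noncomputable def isoOfSection {A B : Cat.{u, u}} [Quiver.IsThin B] (τ : A ⟶ B) (s : B ⟶ A)
    (hs : s ≫ τ = 𝟙 B) (hτ : Function.Injective τ.toFunctor.obj) : ICat A ≅ B where
  hom := lift τ
  inv := s ≫ etaF A
  hom_inv_id := Cat.hom_ext_of_isThin fun x =>
    hτ (congrArg (·.toFunctor.obj (τ.toFunctor.obj x)) hs)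
  inv_hom_id := Cat.hom_ext_of_isThin fun b => congrArg (·.toFunctor.obj b) hs

end ICat

/-- Stable units for the reflection `Cat → Preord`: the pullback over `T` of two connected
components `C_μ`, `D_ν` is again reflected onto `T`: `I (C_μ ×_T D_ν) ≅ T`. -/
theorem ICat_pullback_of_connected_components_iso_T (C D : Cat.{u, u})
    (μ : TCat ⟶ ICat C) (ν : TCat ⟶ ICat D)
    (Cμ : Cat.{u, u}) (π₁ : Cμ ⟶ C) (π₂ : Cμ ⟶ TCat)
    (hC : IsPullback π₁ π₂ (etaF C) μ)
    (Dν : Cat.{u, u}) (ρ₁ : Dν ⟶ D) (ρ₂ : Dν ⟶ TCat)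
    (hD : IsPullback ρ₁ ρ₂ (etaF D) ν)
    (W : Cat.{u, u}) (σ₁ : W ⟶ Cμ) (σ₂ : W ⟶ Dν)
    (hW : IsPullback σ₁ σ₂ π₂ ρ₂) :
    Nonempty (ICat W ≅ TCat) := by
  have hπ₂ := Cat.injective_obj_snd_of_isPullback hC (etaF_obj_injective C)
  have hρ₂ := Cat.injective_obj_snd_of_isPullback hD (etaF_obj_injective D)
  have hσ₂ := Cat.injective_obj_snd_of_isPullback hW hπ₂
  obtain ⟨μ', hμ'⟩ := TCat.exists_lift_etaF μ
  obtain ⟨ν', hν'⟩ := TCat.exists_lift_etaF ν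
  obtain ⟨sC, hsC⟩ := hC.exists_section_snd hμ'
  obtain ⟨sD, hsD⟩ := hD.exists_section_snd hν'
  obtain ⟨s, hs⟩ := hW.exists_section_snd (k := ρ₂ ≫ sC)
    (by rw [Category.assoc, hsC, Category.comp_id])
  exact ⟨ICat.isoOfSection (σ₂ ≫ ρ₂) (sD ≫ s) (by rw [Category.assoc, reassoc_of% hs, hsD])
    (hρ₂.comp hσ₂)⟩
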